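/- arXiv:1901.01567 — 2 statements merged into one kernel-verified Lean document; each statement's English description precedes it below -/
import Mathlib

section
/- With B_n and D_n(λ) as above, D_n satisfies D_{n+1}(λ) = 2λ D_n(λ) + 2n D_{n-1}(λ) for all integers n > 0, and consequently i^{-n} D_n(ix) equals the n-th Hermite polynomial H_n(x) (physicists' convention). -/
/-- Physicists' Hermite polynomials: `H 0 = 1`, `H 1 x = 2x`,
`H (n+2) x = 2x H (n+1) x - 2(n+1) H n x`. -/
noncomputable def hermiteP : ℕ → ℝ → ℝ
  | 0 => fun _ => 1
  | 1 => fun x => 2 * x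
  | (n + 2) => fun x => 2 * x * hermiteP (n + 1) x - 2 * ((n : ℝ) + 1) * hermiteP n x

/-- The tridiagonal antisymmetric matrix with superdiagonal entries `√(2k)` (1-based). -/
noncomputable def Bmat (n : ℕ) : Matrix (Fin n) (Fin n) ℂ :=
  Matrix.of fun j k =>
    if (k : ℕ) = (j : ℕ) + 1 then (Real.sqrt (2 * ((j : ℕ) + 1)) : ℂ)
    else if (j : ℕ) = (k : ℕ) + 1 then -(Real.sqrt (2 * ((k : ℕ) + 1)) : ℂ)
    else 0

/-- `D_n(z) = det (B_n + 2 z I)` (over ℂ so that it can be evaluated at `i x`). -/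
noncomputable def Dpoly (n : ℕ) (z : ℂ) : ℂ :=
  (Bmat n + (2 * z) • (1 : Matrix (Fin n) (Fin n) ℂ)).det

/-!
Expanding `det (B_n + 2λ I)` along its last row gives the three-term recurrence of a tridiagonal
determinant, `D_{n+2} = 2λ D_{n+1} - u_n l_n D_n`, where the off-diagonal product is
`u_n l_n = -(√(2(n+1)))² = -2(n+1)`. At `λ = i x` this is the Hermite recurrence for `i^{-n} D_n(i x)`,
and both sequences start with `1, 2x`.
-/

namespace Matrix

variable {R : Type*} [CommRing R]

def tridiagonal (d u l : ℕ → R) (n : ℕ) : Matrix (Fin n) (Fin n) R :=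
  of fun i j =>
    if (i : ℕ) = j then d i
    else if (j : ℕ) = i + 1 then u i
    else if (i : ℕ) = j + 1 then l j
    else 0

variable (d u l : ℕ → R)

theorem tridiagonal_apply_eq_zero {n : ℕ} {i j : Fin n} (h : (i : ℕ) + 1 < j ∨ (j : ℕ) + 1 < i) :
    tridiagonal d u l n i j = 0 := by
  simp only [tridiagonal, of_apply]
  split_ifs <;> first | rfl | omega

@[simp]
theorem tridiagonal_submatrix_castSucc (n : ℕ) :
    (tridiagonal d u l (n + 1)).submatrix Fin.castSucc Fin.castSucc = tridiagonal d u l n := by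
  ext i j
  simp [tridiagonal]

theorem det_tridiagonal_succ_succ (n : ℕ) :
    (tridiagonal d u l (n + 2)).det =
      d (n + 1) * (tridiagonal d u l (n + 1)).det - u n * l n * (tridiagonal d u l n).det := by
  set T := tridiagonal d u l (n + 2)
  have hminor : (T.submatrix Fin.castSucc (Fin.last n).castSucc.succAbove).det =
      u n * (tridiagonal d u l n).det := by
    rw [det_succ_column _ (Fin.last n), Fin.sum_univ_castSucc, Finset.sum_eq_zero]
    · have hcols : (Fin.last n).castSucc.succAbove ∘ Fin.castSucc = Fin.castSucc ∘ Fin.castSucc :=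
        funext fun k => Fin.succAbove_castSucc_of_lt _ _ (Fin.castSucc_lt_last k)
      have hsub : T.submatrix (Fin.castSucc ∘ Fin.castSucc) (Fin.castSucc ∘ Fin.castSucc) =
          tridiagonal d u l n := by
        rw [← submatrix_submatrix]; simp [T]
      have hu : T (Fin.last n).castSucc (Fin.last (n + 1)) = u n := by simp [T, tridiagonal]
      simp [submatrix_submatrix, hcols, hsub, hu]
    · intro k _
      have : T (Fin.castSucc (Fin.castSucc k)) (Fin.last (n + 1)) = 0 :=
        tridiagonal_apply_eq_zero d u l (by simp)
      simp [this]
  rw [det_succ_row T (Fin.last _), Fin.sum_univ_castSucc, Fin.sum_univ_castSucc, Finset.sum_eq_zero]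
  · have hl : T (Fin.last (n + 1)) (Fin.last n).castSucc = l n := by
      simp [T, tridiagonal, show n ≠ n + 2 by omega]
    have hd : T (Fin.last (n + 1)) (Fin.last (n + 1)) = d (n + 1) := by simp [T, tridiagonal]
    simp only [Fin.val_last, Fin.val_castSucc, odd_add_one_self, Odd.neg_one_pow, Even.add_self,
      Even.neg_pow, one_pow, Fin.succAbove_last, hminor, hl, hd, T, tridiagonal_submatrix_castSucc]
    ring
  · intro k _
    have : T (Fin.last (n + 1)) (Fin.castSucc (Fin.castSucc k)) = 0 :=
      tridiagonal_apply_eq_zero d u l (by simp)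
    simp [this]

end Matrix

theorem Bmat_add_smul_one_eq_tridiagonal (n : ℕ) (z : ℂ) :
    Bmat n + (2 * z) • (1 : Matrix (Fin n) (Fin n) ℂ) =
      Matrix.tridiagonal (fun _ => 2 * z) (fun j => (√(2 * (j + 1)) : ℂ))
        (fun j => -(√(2 * (j + 1)) : ℂ)) n := by
  ext i j
  simp only [Bmat, Matrix.tridiagonal, Matrix.add_apply, Matrix.smul_apply, Matrix.one_apply,
    Matrix.of_apply, smul_eq_mul, Fin.ext_iff]
  split_ifs <;> first | omega | simp

theorem Dpoly_add_two (n : ℕ) (z : ℂ) :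
    Dpoly (n + 2) z = 2 * z * Dpoly (n + 1) z + 2 * (n + 1) * Dpoly n z := by
  have hsq : (√(2 * ((n : ℝ) + 1)) : ℂ) * -(√(2 * ((n : ℝ) + 1)) : ℂ) = -(2 * (n + 1)) := by
    rw [mul_neg, ← Complex.ofReal_mul, Real.mul_self_sqrt (by positivity)]
    push_cast; ring
  simp only [Dpoly, Bmat_add_smul_one_eq_tridiagonal, Matrix.det_tridiagonal_succ_succ, hsq]
  ring

theorem Dpoly_I_mul (n : ℕ) (x : ℝ) : Dpoly n (Complex.I * x) = Complex.I ^ n * hermiteP n x := by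
  induction n using Nat.twoStepInduction with
  | zero => simp [Dpoly, hermiteP]
  | one => simp [Dpoly, Bmat, hermiteP, mul_left_comm]
  | more n ih₀ ih₁ =>
    rw [Dpoly_add_two, ih₀, ih₁, hermiteP]
    push_cast
    linear_combination (2 * (n + 1) * hermiteP n x * Complex.I ^ n : ℂ) * Complex.I_sq

/-- the recurrence `D_{n+1} = 2λ D_n + 2n D_{n-1}` and the identity
`i^{-n} D_n(ix) = H_n(x)`. -/
theorem stmt1 :
    (∀ n : ℕ, 0 < n → ∀ z : ℂ,
      Dpoly (n + 1) z = 2 * z * Dpoly n z + 2 * (n : ℂ) * Dpoly (n - 1) z) ∧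
    (∀ (n : ℕ) (x : ℝ),
      Complex.I ^ (-(n : ℤ)) * Dpoly n (Complex.I * (x : ℂ)) = (hermiteP n x : ℂ)) := by
  refine ⟨fun n hn z => ?_, fun n x => ?_⟩
  · obtain ⟨m, rfl⟩ := Nat.exists_eq_add_of_lt hn
    simpa using Dpoly_add_two m z
  · rw [Dpoly_I_mul, zpow_neg, zpow_natCast, inv_mul_cancel_left₀ (pow_ne_zero _ Complex.I_ne_zero)]
end

section
/- Let α_{j,k} = ∫∫_{ℝ²} φ_{k-1}(x) φ_{j-1}(y) sgn(x-y) dx dy with φ_j the oscillator wave functions, and set α_{0,k} = 0. Then √(j-1) α_{j-1,k} - √j α_{j+1,k} = 2√2 δ_{jk} for all positive integers j, k. -/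
/-!
Write `F_l(y) = ∫ φ_l(x) sgn(x - y) dx`. Then `α_{m+1,l+1} = ∫ F_l φ_m`, and splitting the sign
at `x = y` gives `F_l' = -2 φ_l`. By the ladder relation the left-hand side is `√2 ∫ F_l φ_m'`, and
one integration by parts turns it into `2√2 ∫ φ_l φ_m = 2√2 δ_{lm}`. Orthonormality of the `φ_j`
comes from `H_n' = 2n H_{n-1}` and `(H_n e^{-x²})' = -H_{n+1} e^{-x²}`, which give
`∫ H_{m+1} H_{n+1} e^{-x²} = 2(m+1) ∫ H_m H_n e^{-x²}` by parts.
-/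

open MeasureTheory

/-- The oscillator wave functions `φ_j(x) = (2^j j! √π)^{-1/2} e^{-x²/2} H_j(x)`. -/
noncomputable def phi (j : ℕ) (x : ℝ) : ℝ :=
  (Real.sqrt (2 ^ j * (j.factorial : ℝ) * Real.sqrt Real.pi))⁻¹ *
    Real.exp (-x ^ 2 / 2) * hermiteP j x

/-- `α_{j,k} = ∫∫ φ_{k-1}(x) φ_{j-1}(y) sgn(x-y) dx dy` for `j, k ≥ 1`,
with the convention `α_{0,k} = α_{j,0} = 0`. -/
noncomputable def alph (j k : ℕ) : ℝ :=
  if j = 0 ∨ k = 0 then 0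
  else ∫ y : ℝ, ∫ x : ℝ, phi (k - 1) x * phi (j - 1) y * Real.sign (x - y)

open Polynomial Real

theorem hermiteP_succ (n : ℕ) (x : ℝ) :
    hermiteP (n + 1) x = 2 * x * hermiteP n x - 2 * n * hermiteP (n - 1) x := by
  cases n <;> simp [hermiteP]

theorem hasDerivAt_hermiteP (n : ℕ) (x : ℝ) :
    HasDerivAt (hermiteP n) (2 * n * hermiteP (n - 1) x) x := by
  induction n using hermiteP.induct with
  | case1 => simpa [hermiteP] using hasDerivAt_const x (1 : ℝ)
  | case2 => simpa [hermiteP] using (hasDerivAt_id' x).const_mul (2 : ℝ)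
  | case3 n ih₁ ih₀ =>
    have h : HasDerivAt (fun y => 2 * y * hermiteP (n + 1) y - 2 * ((n : ℝ) + 1) * hermiteP n y)
        _ x := (((hasDerivAt_id' x).const_mul 2).mul ih₁).sub (ih₀.const_mul (2 * ((n : ℝ) + 1)))
    refine h.congr_deriv ?_
    simp only [Nat.succ_eq_add_one, Nat.add_sub_cancel, Nat.cast_add, Nat.cast_one]
    linear_combination (-2) * ((n : ℝ) + 1) * hermiteP_succ n x

noncomputable def hermitePoly : ℕ → ℝ[X]
  | 0 => 1
  | 1 => 2 * X
  | (n + 2) => 2 * X * hermitePoly (n + 1) - 2 * ((n : ℝ[X]) + 1) * hermitePoly n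

theorem eval_hermitePoly (n : ℕ) (x : ℝ) : (hermitePoly n).eval x = hermiteP n x := by
  induction n using hermiteP.induct with
  | case1 | case2 => simp [hermitePoly, hermiteP]
  | case3 n ih₁ ih₀ => simp [hermitePoly, hermiteP, ih₁, ih₀]

theorem integrable_eval_mul_exp_neg_mul_sq (P : ℝ[X]) {b : ℝ} (hb : 0 < b) :
    Integrable fun x : ℝ => P.eval x * exp (-b * x ^ 2) := by
  induction P using Polynomial.induction_on' with
  | add p q hp hq => simpa [add_mul, Pi.add_def] using hp.add hq
  | monomial k a =>
    have hk := integrable_rpow_mul_exp_neg_mul_sq hb (s := k) (by linarith [k.cast_nonneg (α := ℝ)])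
    simpa [mul_assoc] using hk.const_mul a

theorem integrable_hermiteP_mul_hermiteP_mul_exp_neg_mul_sq (m n : ℕ) {b : ℝ} (hb : 0 < b) :
    Integrable fun x => hermiteP m x * hermiteP n x * exp (-b * x ^ 2) := by
  simpa [eval_hermitePoly] using
    integrable_eval_mul_exp_neg_mul_sq (hermitePoly m * hermitePoly n) hb

theorem integrable_hermiteP_mul_exp_neg_mul_sq (n : ℕ) {b : ℝ} (hb : 0 < b) :
    Integrable fun x => hermiteP n x * exp (-b * x ^ 2) := by
  simpa [hermiteP] using integrable_hermiteP_mul_hermiteP_mul_exp_neg_mul_sq 0 n hb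

theorem hasDerivAt_hermiteP_mul_exp_neg_sq (n : ℕ) (x : ℝ) :
    HasDerivAt (fun y => hermiteP n y * exp (-y ^ 2)) (-(hermiteP (n + 1) x * exp (-x ^ 2))) x := by
  refine ((hasDerivAt_hermiteP n x).mul ((hasDerivAt_pow 2 x).fun_neg.exp)).congr_deriv ?_
  rw [hermiteP_succ]
  push_cast
  ring

noncomputable def hermiteNormSq (n : ℕ) : ℝ := 2 ^ n * n.factorial * √π

theorem hermiteNormSq_pos (n : ℕ) : 0 < hermiteNormSq n := by
  unfold hermiteNormSq
  have := pi_pos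
  positivity

theorem sqrt_hermiteNormSq_succ (n : ℕ) :
    √(hermiteNormSq (n + 1)) = √2 * √(n + 1) * √(hermiteNormSq n) := by
  rw [← sqrt_mul zero_le_two, ← sqrt_mul (by positivity)]
  unfold hermiteNormSq
  push_cast [Nat.factorial_succ]
  ring_nf

theorem integrable_hermiteP_mul_hermiteP_mul_exp_neg_sq (m n : ℕ) :
    Integrable fun x => hermiteP m x * hermiteP n x * exp (-x ^ 2) := by
  simpa using integrable_hermiteP_mul_hermiteP_mul_exp_neg_mul_sq m n one_pos

theorem integral_hermiteP_succ_mul_exp_neg_sq (n : ℕ) :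
    ∫ x, hermiteP (n + 1) x * exp (-x ^ 2) = 0 := by
  have hI : ∀ k, Integrable fun x => hermiteP k x * exp (-x ^ 2) := fun k => by
    simpa using integrable_hermiteP_mul_exp_neg_mul_sq k one_pos
  simpa using integral_eq_zero_of_hasDerivAt_of_integrable
    (fun x => (hasDerivAt_hermiteP_mul_exp_neg_sq n x).neg) (hI (n + 1)).neg.neg (hI n).neg

theorem integral_hermiteP_succ_mul_hermiteP_succ_mul_exp_neg_sq (m n : ℕ) :
    ∫ x, hermiteP (m + 1) x * hermiteP (n + 1) x * exp (-x ^ 2)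
      = 2 * (m + 1) * ∫ x, hermiteP m x * hermiteP n x * exp (-x ^ 2) := by
  have hI := integrable_hermiteP_mul_hermiteP_mul_exp_neg_sq
  have h := integral_mul_deriv_eq_deriv_mul_of_integrable
    (fun x _ => hasDerivAt_hermiteP (m + 1) x) (fun x _ => hasDerivAt_hermiteP_mul_exp_neg_sq n x)
    ((hI (m + 1) (n + 1)).neg.congr (ae_of_all _ fun x => by
      simp only [Pi.mul_apply, Pi.neg_apply]; ring))
    (((hI m n).const_mul (2 * (m + 1))).congr (ae_of_all _ fun x => by
      simp only [Pi.mul_apply]; push_cast; ring))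
    ((hI (m + 1) n).congr (ae_of_all _ fun x => by simp only [Pi.mul_apply]; ring))
  simp only [mul_neg, integral_neg, neg_inj, Nat.add_sub_cancel] at h
  rw [← integral_const_mul]
  convert h using 1 <;> congr 1 <;> ext x <;> push_cast <;> ring

theorem integral_hermiteP_mul_hermiteP_mul_exp_neg_sq (m n : ℕ) :
    ∫ x, hermiteP m x * hermiteP n x * exp (-x ^ 2)
      = if m = n then hermiteNormSq n else 0 := by
  induction m generalizing n with
  | zero =>
    cases n with
    | zero => simpa [hermiteP, hermiteNormSq] using integral_gaussian 1
    | succ n => simpa [hermiteP] using integral_hermiteP_succ_mul_exp_neg_sq n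
  | succ m ih =>
    cases n with
    | zero => simpa [hermiteP] using integral_hermiteP_succ_mul_exp_neg_sq m
    | succ n =>
      rw [integral_hermiteP_succ_mul_hermiteP_succ_mul_exp_neg_sq, ih]
      split_ifs with h₁ h₂ h₂
      · subst h₁; rw [hermiteNormSq, hermiteNormSq]; push_cast [Nat.factorial_succ]; ring
      · omega
      · omega
      · simp

theorem phi_eq (n : ℕ) (x : ℝ) :
    phi n x = (√(hermiteNormSq n))⁻¹ * exp (-x ^ 2 / 2) * hermiteP n x := rfl

theorem sqrt_succ_mul_phi_succ (n : ℕ) (x : ℝ) :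
    √(n + 1) * phi (n + 1) x
      = (√2)⁻¹ * (√(hermiteNormSq n))⁻¹ * exp (-x ^ 2 / 2) * hermiteP (n + 1) x := by
  have hb : √((n : ℝ) + 1) ≠ 0 := (sqrt_pos.2 (by positivity)).ne'
  rw [phi_eq, sqrt_hermiteNormSq_succ]
  field_simp

theorem sqrt_mul_phi_pred (n : ℕ) (x : ℝ) :
    √n * phi (n - 1) x
      = √2 * n * (√(hermiteNormSq n))⁻¹ * exp (-x ^ 2 / 2) * hermiteP (n - 1) x := by
  cases n with
  | zero => simp
  | succ n =>
    have hb : √((n : ℝ) + 1) ≠ 0 := (sqrt_pos.2 (by positivity)).ne'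
    have hb2 : √((n : ℝ) + 1) ^ 2 = n + 1 := sq_sqrt (by positivity)
    have hs : √(hermiteNormSq n) ≠ 0 := (sqrt_pos.2 (hermiteNormSq_pos n)).ne'
    rw [phi_eq, Nat.add_sub_cancel, sqrt_hermiteNormSq_succ]
    field_simp
    push_cast
    linear_combination hermiteP n x * hb2

theorem hasDerivAt_phi (n : ℕ) (x : ℝ) :
    HasDerivAt (phi n) ((√n * phi (n - 1) x - √(n + 1) * phi (n + 1) x) / √2) x := by
  have h := ((((hasDerivAt_pow 2 x).fun_neg.div_const 2).exp.const_mul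
    (√(hermiteNormSq n))⁻¹).mul (hasDerivAt_hermiteP n x))
  refine h.congr_deriv ?_
  have h2 : √2 ^ 2 = 2 := sq_sqrt zero_le_two
  rw [sqrt_mul_phi_pred, sqrt_succ_mul_phi_succ, hermiteP_succ]
  have hs : √(hermiteNormSq n) ≠ 0 := (sqrt_pos.2 (hermiteNormSq_pos n)).ne'
  field_simp
  push_cast
  linear_combination (2 * n * hermiteP (n - 1) x - 2 * x * hermiteP n x) * h2

theorem continuous_phi (n : ℕ) : Continuous (phi n) :=
  continuous_iff_continuousAt.2 fun x => (hasDerivAt_phi n x).continuousAt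

theorem integrable_phi (n : ℕ) : Integrable (phi n) := by
  refine ((integrable_hermiteP_mul_exp_neg_mul_sq n (b := 1 / 2) one_half_pos).const_mul
    (√(hermiteNormSq n))⁻¹).congr (ae_of_all _ fun x => ?_)
  rw [phi_eq]
  ring_nf

theorem phi_mul_phi (m n : ℕ) (x : ℝ) :
    phi m x * phi n x = (√(hermiteNormSq m))⁻¹ * (√(hermiteNormSq n))⁻¹ *
      (hermiteP m x * hermiteP n x * exp (-x ^ 2)) := by
  have he : exp (-x ^ 2) = exp (-x ^ 2 / 2) * exp (-x ^ 2 / 2) := by rw [← exp_add]; ring_nf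
  rw [phi_eq, phi_eq, he]
  ring

theorem integrable_phi_mul_phi (m n : ℕ) : Integrable fun x => phi m x * phi n x := by
  simpa only [phi_mul_phi] using (integrable_hermiteP_mul_hermiteP_mul_exp_neg_sq m n).const_mul _

theorem integral_phi_mul_phi (m n : ℕ) : ∫ x, phi m x * phi n x = if m = n then 1 else 0 := by
  simp only [phi_mul_phi, integral_const_mul, integral_hermiteP_mul_hermiteP_mul_exp_neg_sq]
  split_ifs with h
  · subst h
    rw [← mul_inv, mul_self_sqrt (hermiteNormSq_pos m).le,
      inv_mul_cancel₀ (hermiteNormSq_pos m).ne']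
  · simp

section SignTransform

variable {f : ℝ → ℝ}

noncomputable def signTransform (f : ℝ → ℝ) (y : ℝ) : ℝ := ∫ x, f x * Real.sign (x - y)

theorem signTransform_eq (hf : Integrable f) (y : ℝ) :
    signTransform f y = (∫ x, f x) - 2 * ∫ x in Set.Iic y, f x := by
  have hae : (fun x => f x * Real.sign (x - y)) =ᵐ[volume]
      fun x => f x - 2 * (Set.Iic y).indicator f x := by
    filter_upwards [Measure.ae_ne volume y] with x hx
    rcases hx.lt_or_gt with hlt | hgt
    · simp [Real.sign_of_neg (sub_neg.2 hlt), hlt.le]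
      ring
    · simp [Real.sign_of_pos (sub_pos.2 hgt), hgt.not_ge]
  rw [signTransform, integral_congr_ae hae,
    integral_sub hf ((hf.indicator measurableSet_Iic).const_mul 2), integral_const_mul,
    integral_indicator measurableSet_Iic]

theorem hasDerivAt_signTransform (hf : Integrable f) (hc : Continuous f) (y : ℝ) :
    HasDerivAt (signTransform f) (-2 * f y) y := by
  have hIic : signTransform f
      = fun z => (∫ x, f x) - 2 * ((∫ x in Set.Iic 0, f x) + ∫ x in (0 : ℝ)..z, f x) := by
    ext z
    rw [signTransform_eq hf,
      ← intervalIntegral.integral_Iic_sub_Iic hf.integrableOn hf.integrableOn]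
    ring
  have h := (((hc.integral_hasStrictDerivAt 0 y).hasDerivAt.const_add
    (∫ x in Set.Iic 0, f x)).const_mul 2).const_sub (∫ x, f x)
  rw [hIic]
  exact h.congr_deriv (by ring)

theorem norm_signTransform_le (hf : Integrable f) (y : ℝ) :
    ‖signTransform f y‖ ≤ ∫ x, ‖f x‖ := by
  refine norm_integral_le_of_norm_le hf.norm (ae_of_all _ fun x => ?_)
  rw [norm_mul]
  refine mul_le_of_le_one_right (norm_nonneg _) ?_
  rcases Real.sign_apply_eq (x - y) with h | h | h <;> simp [h]

theorem integrable_signTransform_mul {g : ℝ → ℝ} (hf : Integrable f) (hc : Continuous f)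
    (hg : Integrable g) : Integrable fun y => signTransform f y * g y :=
  hg.bdd_mul (continuous_iff_continuousAt.2 fun y =>
    (hasDerivAt_signTransform hf hc y).continuousAt).aestronglyMeasurable
    (ae_of_all _ (norm_signTransform_le hf))

theorem integral_signTransform_mul_deriv {g g' : ℝ → ℝ} (hf : Integrable f) (hc : Continuous f)
    (hg : ∀ x, HasDerivAt g (g' x) x) (hgi : Integrable g) (hg' : Integrable g')
    (hfg : Integrable fun x => f x * g x) :
    ∫ y, signTransform f y * g' y = 2 * ∫ y, f y * g y := by
  have hf'g : Integrable ((fun y => -2 * f y) * g) :=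
    (hfg.const_mul (-2)).congr (ae_of_all _ fun y => by simp only [Pi.mul_apply]; ring)
  rw [integral_mul_deriv_eq_deriv_mul_of_integrable (fun y _ => hasDerivAt_signTransform hf hc y)
    (fun y _ => hg y) (integrable_signTransform_mul hf hc hg') hf'g
    (integrable_signTransform_mul hf hc hgi), ← integral_const_mul, ← integral_neg]
  congr 1 with y
  ring

end SignTransform

theorem alph_succ_succ (m l : ℕ) :
    alph (m + 1) (l + 1) = ∫ y, signTransform (phi l) y * phi m y := by
  rw [alph, if_neg (by simp)]
  congr 1 with y
  simp only [Nat.add_sub_cancel, signTransform, ← integral_mul_const]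
  congr 1 with x
  ring

theorem sqrt_mul_alph (m l : ℕ) :
    √m * alph m (l + 1) = √m * ∫ y, signTransform (phi l) y * phi (m - 1) y := by
  cases m with
  | zero => simp
  | succ m => rw [alph_succ_succ, Nat.add_sub_cancel]

theorem sqrt_mul_alph_sub_sqrt_mul_alph (m l : ℕ) :
    √m * alph m (l + 1) - √(m + 1) * alph (m + 2) (l + 1) = 2 * √2 * if m = l then 1 else 0 := by
  have hF : ∀ n, Integrable fun y => signTransform (phi l) y * phi n y := fun n =>
    integrable_signTransform_mul (integrable_phi l) (continuous_phi l) (integrable_phi n)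
  have hφ' : Integrable fun y => (√m * phi (m - 1) y - √(m + 1) * phi (m + 1) y) / √2 :=
    (((integrable_phi _).const_mul _).sub ((integrable_phi _).const_mul _)).div_const _
  have h2 : √2 ≠ 0 := by positivity
  calc √m * alph m (l + 1) - √(m + 1) * alph (m + 2) (l + 1)
      = √2 * ∫ y, signTransform (phi l) y
          * ((√m * phi (m - 1) y - √(m + 1) * phi (m + 1) y) / √2) := by
        rw [sqrt_mul_alph, alph_succ_succ, ← integral_const_mul, ← integral_const_mul,
          ← integral_const_mul, ← integral_sub ((hF _).const_mul _) ((hF _).const_mul _)]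
        congr 1 with y
        field_simp
    _ = √2 * (2 * ∫ y, phi l y * phi m y) := by
        rw [integral_signTransform_mul_deriv (integrable_phi l) (continuous_phi l)
          (hasDerivAt_phi m) (integrable_phi m) hφ' (integrable_phi_mul_phi l m)]
    _ = 2 * √2 * if m = l then 1 else 0 := by
        rw [integral_phi_mul_phi]
        simp only [eq_comm (a := l)]
        ring

/-- `√(j-1) α_{j-1,k} - √j α_{j+1,k} = 2√2 δ_{jk}` for positive integers `j, k`. -/
theorem stmt7 (j k : ℕ) (hj : 0 < j) (hk : 0 < k) :
    Real.sqrt ((j : ℝ) - 1) * alph (j - 1) k - Real.sqrt j * alph (j + 1) k =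
      2 * Real.sqrt 2 * (if j = k then 1 else 0) := by
  obtain ⟨m, rfl⟩ : ∃ m, j = m + 1 := ⟨j - 1, by omega⟩
  obtain ⟨l, rfl⟩ : ∃ l, k = l + 1 := ⟨k - 1, by omega⟩
  simpa using sqrt_mul_alph_sub_sqrt_mul_alph m l
end
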